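/- Let X be a real Hilbert space, 0 < α < 1, 0 < r < min{1/2, (1−α)/α}, T > 0, A > 0, and let σ₁ > max{1, (2−α)/((2r−1)α+1)} and σ₂ > max{1, (2−α)/(α+1)}. For an integer M ≥ 2, define the graded temporal grid t_j := (j/M)^{σ₁} · T/2 for 0 ≤ j ≤ M and t_j := T − (2 − j/M)^{σ₂} · T/2 for M < j ≤ 2M. Let p : [0,T] → X be continuous, continuously differentiable on (0,T), with ‖p'(t)‖ ≤ A (t^{αr+α/2−1} + (T−t)^{α/2−1}) for 0 < t < T, and let Q_τ p be the piecewise average of p on this grid: (Q_τ p)(t) := (t_j − t_{j−1})^{−1} ∫_{t_{j−1}}^{t_j} p(s) ds for t ∈ (t_{j−1}, t_j). Then there exists a constant C depending only on α, r, σ₁, σ₂ and T such that (∫₀ᵀ ‖p(t) − (Q_τ p)(t)‖² dt)^{1/2} ≤ C A M^{α/2−1} for every integer M ≥ 2. -/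

import Mathlib

/-!
On a cell `[a, b]` the distance from `p t` to the cell average of `p` is at most the oscillation
of `p` on the cell, hence at most `∫_a^b ‖p'‖`; so the cell contributes at most
`(b - a) (A ∫_a^b g)²` to the squared error, where `g t = t^(αr+α/2-1) + (T-t)^(α/2-1)`.
On the left half `(0, T/2]` we have `g t ≤ C t^(δ-1)` with `δ = αr + α/2`, and on the cells
`[(k/M)^σ T/2, ((k+1)/M)^σ T/2]` both the cell length and the integral of `t^(δ-1)` are increments
of powers of `k/M`, each at most a multiple of `(k+1)^(μ-1) / M^μ`. The contributions add up to a
multiple of `M^(α-2)` as soon as `σ (1 + 2δ) > 2 - α`, which the grading condition on `σ₁` ensures.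
The right half is the left half of the problem reflected by `t ↦ T - t`, with `δ = α/2`.
-/

open Real Set Finset MeasureTheory

noncomputable def gradedGrid (σ₁ σ₂ T : ℝ) (M j : ℕ) : ℝ :=
  if j ≤ M then ((j : ℝ) / (M : ℝ)) ^ σ₁ * (T / 2)
  else T - (2 - (j : ℝ) / (M : ℝ)) ^ σ₂ * (T / 2)

section PowerIncrement

variable {μ t x y : ℝ}

theorem rpow_le_one_sub_min_mul (hμ : 0 ≤ μ) (ht₀ : 0 ≤ t) (ht₁ : t ≤ 1) :
    t ^ μ ≤ 1 - min μ 1 * (1 - t) := by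
  rcases le_total μ 1 with h | h
  · have := rpow_one_add_le_one_add_mul_self (s := t - 1) (by linarith) hμ h
    rw [min_eq_left h]
    simp only [add_sub_cancel] at this
    linarith
  · have := rpow_le_rpow_of_exponent_ge' ht₀ ht₁ zero_le_one h
    rw [min_eq_right h, rpow_one] at *
    linarith

theorem one_sub_max_mul_le_rpow (hμ : 0 ≤ μ) (ht₀ : 0 ≤ t) (ht₁ : t ≤ 1) :
    1 - max μ 1 * (1 - t) ≤ t ^ μ := by
  rcases le_total μ 1 with h | h
  · have := rpow_le_rpow_of_exponent_ge' ht₀ ht₁ hμ h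
    rw [max_eq_right h, rpow_one] at *
    linarith
  · have := one_add_mul_self_le_rpow_one_add (s := t - 1) (by linarith) h
    rw [max_eq_left h]
    simp only [add_sub_cancel] at this
    linarith

theorem rpow_sub_rpow_le (hμ : 0 ≤ μ) (hy : 0 ≤ y) (hyx : y ≤ x) :
    x ^ μ - y ^ μ ≤ max μ 1 * x ^ (μ - 1) * (x - y) := by
  rcases hyx.eq_or_lt with rfl | hlt
  · simp
  have hx : 0 < x := hy.trans_lt hlt
  obtain ⟨t, ht₀, ht₁, rfl⟩ : ∃ t, 0 ≤ t ∧ t ≤ 1 ∧ y = t * x :=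
    ⟨y / x, div_nonneg hy hx.le, (div_le_one hx).2 hyx, by field_simp⟩
  have := one_sub_max_mul_le_rpow hμ ht₀ ht₁
  calc x ^ μ - (t * x) ^ μ = x ^ μ * (1 - t ^ μ) := by rw [mul_rpow ht₀ hx.le]; ring
    _ ≤ x ^ μ * (max μ 1 * (1 - t)) := by gcongr; linarith
    _ = max μ 1 * x ^ (μ - 1) * (x - t * x) := by rw [rpow_sub_one hx.ne']; field_simp

theorem min_mul_le_rpow_sub_rpow (hμ : 0 ≤ μ) (hy : 0 ≤ y) (hyx : y ≤ x) :
    min μ 1 * x ^ (μ - 1) * (x - y) ≤ x ^ μ - y ^ μ := by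
  rcases hyx.eq_or_lt with rfl | hlt
  · simp
  have hx : 0 < x := hy.trans_lt hlt
  obtain ⟨t, ht₀, ht₁, rfl⟩ : ∃ t, 0 ≤ t ∧ t ≤ 1 ∧ y = t * x :=
    ⟨y / x, div_nonneg hy hx.le, (div_le_one hx).2 hyx, by field_simp⟩
  have := rpow_le_one_sub_min_mul hμ ht₀ ht₁
  calc min μ 1 * x ^ (μ - 1) * (x - t * x) = x ^ μ * (min μ 1 * (1 - t)) := by
        rw [rpow_sub_one hx.ne']; field_simp
    _ ≤ x ^ μ * (1 - t ^ μ) := by gcongr; linarith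
    _ = x ^ μ - (t * x) ^ μ := by rw [mul_rpow ht₀ hx.le]; ring

end PowerIncrement

theorem sum_range_succ_rpow_le {e : ℝ} (he : -1 < e) (n : ℕ) :
    ∑ k ∈ range n, ((k : ℝ) + 1) ^ e ≤ (n : ℝ) ^ (e + 1) / min (e + 1) 1 := by
  have hmin : 0 < min (e + 1) 1 := lt_min (by linarith) one_pos
  have hterm : ∀ k : ℕ, min (e + 1) 1 * ((k : ℝ) + 1) ^ e
      ≤ ((k + 1 : ℕ) : ℝ) ^ (e + 1) - (k : ℝ) ^ (e + 1) := fun k => by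
    have := min_mul_le_rpow_sub_rpow (μ := e + 1) (x := (k : ℝ) + 1) (y := k) (by linarith)
      k.cast_nonneg (by linarith)
    simpa using this
  rw [le_div_iff₀ hmin, mul_comm, mul_sum]
  calc ∑ k ∈ range n, min (e + 1) 1 * ((k : ℝ) + 1) ^ e
      ≤ ∑ k ∈ range n, (((k + 1 : ℕ) : ℝ) ^ (e + 1) - (k : ℝ) ^ (e + 1)) :=
        sum_le_sum fun k _ => hterm k
    _ = (n : ℝ) ^ (e + 1) := by
        rw [sum_range_sub (fun k : ℕ => (k : ℝ) ^ (e + 1))]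
        simp [zero_rpow (by linarith : e + 1 ≠ 0)]

noncomputable def gradedStep (σ : ℝ) (M k : ℕ) : ℝ :=
  (((k : ℝ) + 1) / M) ^ σ - ((k : ℝ) / M) ^ σ

theorem gradedStep_nonneg {σ : ℝ} (hσ : 0 ≤ σ) (M k : ℕ) : 0 ≤ gradedStep σ M k :=
  sub_nonneg.2 <| rpow_le_rpow (by positivity) (by gcongr; linarith) hσ

theorem gradedStep_le {σ : ℝ} (hσ : 0 ≤ σ) (M k : ℕ) :
    gradedStep σ M k ≤ max σ 1 * ((k : ℝ) + 1) ^ (σ - 1) / (M : ℝ) ^ σ := by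
  have h := rpow_sub_rpow_le (x := (k : ℝ) + 1) hσ k.cast_nonneg (by linarith)
  rw [add_sub_cancel_left, mul_one] at h
  rw [gradedStep, div_rpow (by positivity) M.cast_nonneg, div_rpow k.cast_nonneg M.cast_nonneg,
    ← sub_div]
  gcongr

theorem exists_sum_gradedStep_mul_sq_le {α σ δ : ℝ} (hα : 0 ≤ α) (hσ : 0 < σ) (hδ : 0 < δ)
    (h : 2 - α < σ * (1 + 2 * δ)) :
    ∃ K > 0, ∀ M : ℕ, 0 < M →
      ∑ k ∈ range M, gradedStep σ M k * gradedStep (σ * δ) M k ^ 2 ≤ K * (M : ℝ) ^ (α - 2) := by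
  set e := σ * (1 + 2 * δ) - 3
  set m := max σ 1 * max (σ * δ) 1 ^ 2
  have hm : 0 < m := by positivity
  have hmin : 0 < min (e + α + 1) 1 := lt_min (by linarith) one_pos
  refine ⟨m / min (e + α + 1) 1, by positivity, fun M hM => ?_⟩
  have hM' : (0 : ℝ) < M := Nat.cast_pos.2 hM
  have hterm : ∀ k : ℕ, gradedStep σ M k * gradedStep (σ * δ) M k ^ 2
      ≤ m / (M : ℝ) ^ (e + 3) * ((k : ℝ) + 1) ^ (e + α) := fun k => by
    have hk : (0 : ℝ) < k + 1 := by positivity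
    calc gradedStep σ M k * gradedStep (σ * δ) M k ^ 2
        ≤ (max σ 1 * ((k : ℝ) + 1) ^ (σ - 1) / (M : ℝ) ^ σ) *
            (max (σ * δ) 1 * ((k : ℝ) + 1) ^ (σ * δ - 1) / (M : ℝ) ^ (σ * δ)) ^ 2 := by
          gcongr
          · exact gradedStep_le hσ.le M k
          · exact gradedStep_nonneg (by positivity) M k
          · exact gradedStep_le (by positivity) M k
      _ = m / (M : ℝ) ^ (e + 3) * ((k : ℝ) + 1) ^ e := by
          have hpow : ∀ {z : ℝ}, 0 < z → ∀ a b : ℝ, z ^ a * (z ^ b) ^ 2 = z ^ (a + 2 * b) :=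
            fun hz a b => by
              rw [← rpow_natCast, ← rpow_mul hz.le, ← rpow_add hz]
              ring_nf
          rw [show e = σ - 1 + 2 * (σ * δ - 1) by ring,
            show σ - 1 + 2 * (σ * δ - 1) + 3 = σ + 2 * (σ * δ) by ring,
            ← hpow hk, ← hpow hM']
          ring
      _ ≤ m / (M : ℝ) ^ (e + 3) * ((k : ℝ) + 1) ^ (e + α) := by
          gcongr
          · linarith
          · linarith
  calc ∑ k ∈ range M, gradedStep σ M k * gradedStep (σ * δ) M k ^ 2
      ≤ m / (M : ℝ) ^ (e + 3) * ∑ k ∈ range M, ((k : ℝ) + 1) ^ (e + α) := by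
        rw [mul_sum]
        exact sum_le_sum fun k _ => hterm k
    _ ≤ m / (M : ℝ) ^ (e + 3) * ((M : ℝ) ^ (e + α + 1) / min (e + α + 1) 1) := by
        gcongr
        exact sum_range_succ_rpow_le (by linarith) M
    _ = m / min (e + α + 1) 1 * (M : ℝ) ^ (α - 2) := by
        rw [show α - 2 = (e + α + 1) - (e + 3) by ring, rpow_sub hM']
        ring

section Integrals

variable {X : Type*} [NormedAddCommGroup X] [NormedSpace ℝ X]

theorem intervalIntegral.integral_le_add_adjacent_intervals {f : ℝ → ℝ} (hf : 0 ≤ f)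
    {a b c : ℝ} (hab : a ≤ b) (hbc : b ≤ c) :
    ∫ x in a..c, f x ≤ (∫ x in a..b, f x) + ∫ x in b..c, f x := by
  have h₁ : 0 ≤ ∫ x in a..b, f x := intervalIntegral.integral_nonneg hab fun x _ => hf x
  have h₂ : 0 ≤ ∫ x in b..c, f x := intervalIntegral.integral_nonneg hbc fun x _ => hf x
  by_cases hi : IntervalIntegrable f volume a c
  · have hb : b ∈ uIcc a c := mem_uIcc_of_le hab hbc
    rw [intervalIntegral.integral_add_adjacent_intervals (hi.mono_set (uIcc_subset_uIcc_left hb))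
      (hi.mono_set (uIcc_subset_uIcc_right hb))]
  · rw [intervalIntegral.integral_undef hi]
    positivity

theorem intervalIntegral.integral_le_sum_integral_of_monotone {f : ℝ → ℝ} (hf : 0 ≤ f)
    {u : ℕ → ℝ} (hu : Monotone u) (n : ℕ) :
    ∫ x in u 0..u n, f x ≤ ∑ k ∈ range n, ∫ x in u k..u (k + 1), f x := by
  induction n with
  | zero => simp
  | succ n ih =>
    rw [sum_range_succ]
    exact (integral_le_add_adjacent_intervals hf (hu n.zero_le) (hu n.le_succ)).trans
      (by linarith)

variable [CompleteSpace X]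

theorem norm_sub_le_integral_of_norm_deriv_le {p p' : ℝ → X} {φ : ℝ → ℝ} {a b : ℝ} (hab : a ≤ b)
    (hp : ContinuousOn p (Icc a b)) (hd : ∀ t ∈ Ioo a b, HasDerivAt p (p' t) t)
    (hp' : ContinuousOn p' (Ioo a b)) (hφ : IntervalIntegrable φ volume a b)
    (hb : ∀ t ∈ Ioo a b, ‖p' t‖ ≤ φ t) :
    ‖p b - p a‖ ≤ ∫ t in a..b, φ t := by
  have hb' : ∀ᵐ t, t ∈ Ioc a b → ‖p' t‖ ≤ φ t := by
    filter_upwards [Measure.ae_ne volume b] with t htb ht using hb t ⟨ht.1, ht.2.lt_of_ne htb⟩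
  have hp'i : IntervalIntegrable p' volume a b := by
    rw [intervalIntegrable_iff_integrableOn_Ioo_of_le hab]
    refine ((intervalIntegrable_iff_integrableOn_Ioo_of_le hab).1 hφ).mono'
      (hp'.aestronglyMeasurable measurableSet_Ioo) ?_
    exact (ae_restrict_iff' measurableSet_Ioo).2 (.of_forall hb)
  rw [← intervalIntegral.integral_eq_sub_of_hasDerivAt_of_le hab hp hd hp'i]
  exact intervalIntegral.norm_integral_le_of_norm_le hab hb' hφ

theorem norm_sub_average_le {p : ℝ → X} {a b ε t : ℝ} (hab : a < b)
    (hp : IntervalIntegrable p volume a b) (h : ∀ s ∈ Icc a b, ‖p t - p s‖ ≤ ε) :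
    ‖p t - (b - a)⁻¹ • ∫ s in a..b, p s‖ ≤ ε := by
  have hba : 0 < b - a := sub_pos.2 hab
  have hrepr : p t - (b - a)⁻¹ • ∫ s in a..b, p s = (b - a)⁻¹ • ∫ s in a..b, (p t - p s) := by
    rw [intervalIntegral.integral_sub intervalIntegrable_const hp, intervalIntegral.integral_const,
      smul_sub, smul_smul, inv_mul_cancel₀ hba.ne', one_smul]
  have hint : ‖∫ s in a..b, (p t - p s)‖ ≤ ε * |b - a| :=
    intervalIntegral.norm_integral_le_of_norm_le_const fun s hs => by
      rw [uIoc_of_le hab.le] at hs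
      exact h s (Ioc_subset_Icc_self hs)
  rw [abs_of_pos hba] at hint
  rw [hrepr, norm_smul, norm_inv, Real.norm_of_nonneg hba.le, inv_mul_le_iff₀ hba]
  linarith

theorem integral_norm_sub_average_sq_le {p p' Q : ℝ → X} {φ : ℝ → ℝ} {a b : ℝ} (hab : a < b)
    (hp : ContinuousOn p (Icc a b)) (hd : ∀ t ∈ Ioo a b, HasDerivAt p (p' t) t)
    (hp' : ContinuousOn p' (Ioo a b)) (hφ : IntervalIntegrable φ volume a b)
    (hb : ∀ t ∈ Ioo a b, ‖p' t‖ ≤ φ t)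
    (hQ : ∀ t ∈ Ioo a b, Q t = (b - a)⁻¹ • ∫ s in a..b, p s) :
    ∫ t in a..b, ‖p t - Q t‖ ^ 2 ≤ (b - a) * (∫ t in a..b, φ t) ^ 2 := by
  have hφ₀ : 0 ≤ᵐ[volume.restrict (Ioc a b)] φ := by
    rw [Filter.EventuallyLE, ae_restrict_iff' measurableSet_Ioc]
    filter_upwards [Measure.ae_ne volume b] with t htb ht
    exact (norm_nonneg _).trans (hb t ⟨ht.1, ht.2.lt_of_ne htb⟩)
  have hosc : ∀ s ∈ Icc a b, ∀ u ∈ Icc a b, s ≤ u → ‖p u - p s‖ ≤ ∫ t in a..b, φ t :=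
    fun s hs u hu hsu => by
      have hsub : Icc s u ⊆ Icc a b := Icc_subset_Icc hs.1 hu.2
      refine (norm_sub_le_integral_of_norm_deriv_le hsu (hp.mono hsub)
        (fun t ht => hd t (Ioo_subset_Ioo hs.1 hu.2 ht)) (hp'.mono (Ioo_subset_Ioo hs.1 hu.2))
        (hφ.mono_set (by rwa [uIcc_of_le hsu, uIcc_of_le hab.le]))
        (fun t ht => hb t (Ioo_subset_Ioo hs.1 hu.2 ht))).trans ?_
      exact intervalIntegral.integral_mono_interval hs.1 hsu hu.2 hφ₀ hφ
  have hpt : ∀ t ∈ Ioo a b, ‖p t - Q t‖ ≤ ∫ t in a..b, φ t := fun t ht => by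
    rw [hQ t ht]
    refine norm_sub_average_le hab ((hp.mono (uIcc_of_le hab.le).subset).intervalIntegrable)
      fun s hs => ?_
    rcases le_total s t with hst | hts
    · exact hosc s hs t (Ioo_subset_Icc_self ht) hst
    · rw [norm_sub_rev]
      exact hosc t (Ioo_subset_Icc_self ht) s hs hts
  have hsq : ∀ᵐ t, t ∈ uIoc a b → ‖‖p t - Q t‖ ^ 2‖ ≤ (∫ t in a..b, φ t) ^ 2 := by
    filter_upwards [Measure.ae_ne volume b] with t htb ht
    rw [uIoc_of_le hab.le] at ht
    rw [norm_pow, norm_norm]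
    exact pow_le_pow_left₀ (norm_nonneg _) (hpt t ⟨ht.1, ht.2.lt_of_ne htb⟩) 2
  calc ∫ t in a..b, ‖p t - Q t‖ ^ 2 ≤ ‖∫ t in a..b, ‖p t - Q t‖ ^ 2‖ := le_norm_self _
    _ ≤ (∫ t in a..b, φ t) ^ 2 * |b - a| :=
        intervalIntegral.norm_integral_le_of_norm_le_const_ae hsq
    _ = (b - a) * (∫ t in a..b, φ t) ^ 2 := by rw [abs_of_pos (sub_pos.2 hab), mul_comm]

end Integrals

section PiecewiseAverage

variable {X : Type*} [NormedAddCommGroup X] [NormedSpace ℝ X]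

def IsPiecewiseAverage (p Q : ℝ → X) (u : ℕ → ℝ) (n : ℕ) : Prop :=
  ∀ k < n, ∀ t ∈ Ioo (u k) (u (k + 1)),
    Q t = (u (k + 1) - u k)⁻¹ • ∫ s in u k..u (k + 1), p s

variable {p Q : ℝ → X} {u : ℕ → ℝ} {n : ℕ}

theorem IsPiecewiseAverage.restrict (hQ : IsPiecewiseAverage p Q u n) {m : ℕ} (hmn : m ≤ n)
    {v : ℕ → ℝ} (huv : ∀ k ≤ m, u k = v k) : IsPiecewiseAverage p Q v m := fun k hk t ht => by
  rw [← huv k hk.le, ← huv (k + 1) hk] at ht ⊢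
  exact hQ k (hk.trans_le hmn) t ht

theorem IsPiecewiseAverage.reflect (hQ : IsPiecewiseAverage p Q u n) (T : ℝ) :
    IsPiecewiseAverage (fun x => p (T - x)) (fun x => Q (T - x)) (fun k => T - u (n - k)) n :=
  fun k hk t ht => by
    obtain ⟨j, hj, hj'⟩ : ∃ j, n - k = j + 1 ∧ n - (k + 1) = j := ⟨n - (k + 1), by omega, rfl⟩
    simp only [hj, hj'] at ht ⊢
    rw [intervalIntegral.integral_comp_sub_left (fun x => p x), sub_sub_cancel, sub_sub_cancel,
      sub_sub_sub_cancel_left]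
    exact hQ j (by omega) (T - t) ⟨by linarith [ht.2], by linarith [ht.1]⟩

variable {p' : ℝ → X} [CompleteSpace X]

theorem IsPiecewiseAverage.integral_sq_sub_le (hQ : IsPiecewiseAverage p Q u n) (hu : StrictMono u)
    {φ : ℝ → ℝ} (hp : ContinuousOn p (Icc (u 0) (u n)))
    (hd : ∀ t ∈ Ioo (u 0) (u n), HasDerivAt p (p' t) t) (hp' : ContinuousOn p' (Ioo (u 0) (u n)))
    (hφ : IntervalIntegrable φ volume (u 0) (u n)) (hb : ∀ t ∈ Ioo (u 0) (u n), ‖p' t‖ ≤ φ t) :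
    ∫ t in u 0..u n, ‖p t - Q t‖ ^ 2
      ≤ ∑ k ∈ range n, (u (k + 1) - u k) * (∫ t in u k..u (k + 1), φ t) ^ 2 := by
  refine (intervalIntegral.integral_le_sum_integral_of_monotone (fun _ => by positivity)
    hu.monotone n).trans (sum_le_sum fun k hk => ?_)
  have hk : k + 1 ≤ n := mem_range.1 hk
  have hIcc : Icc (u k) (u (k + 1)) ⊆ Icc (u 0) (u n) :=
    Icc_subset_Icc (hu.monotone k.zero_le) (hu.monotone hk)
  have hIoo : Ioo (u k) (u (k + 1)) ⊆ Ioo (u 0) (u n) :=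
    Ioo_subset_Ioo (hu.monotone k.zero_le) (hu.monotone hk)
  exact integral_norm_sub_average_sq_le (hu k.lt_succ_self) (hp.mono hIcc)
    (fun t ht => hd t (hIoo ht)) (hp'.mono hIoo)
    (hφ.mono_set (by rwa [uIcc_of_le (hu.monotone n.zero_le), uIcc_of_le (hu k.lt_succ_self).le]))
    (fun t ht => hb t (hIoo ht)) (hQ k hk)

end PiecewiseAverage

noncomputable def gradedMesh (σ c : ℝ) (M k : ℕ) : ℝ := ((k : ℝ) / M) ^ σ * c

section GradedMesh

variable {σ c : ℝ} {M : ℕ}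

theorem gradedMesh_zero (hσ : σ ≠ 0) : gradedMesh σ c M 0 = 0 := by
  simp [gradedMesh, zero_rpow hσ]

theorem gradedMesh_self (hM : M ≠ 0) : gradedMesh σ c M M = c := by
  simp [gradedMesh, hM]

theorem gradedMesh_strictMono (hσ : 0 < σ) (hc : 0 < c) (hM : 0 < M) :
    StrictMono (gradedMesh σ c M) := fun i j hij => by
  have : (i : ℝ) < j := Nat.cast_lt.2 hij
  unfold gradedMesh
  gcongr

theorem gradedMesh_succ_sub (k : ℕ) :
    gradedMesh σ c M (k + 1) - gradedMesh σ c M k = c * gradedStep σ M k := by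
  simp only [gradedMesh, gradedStep, Nat.cast_succ]
  ring

theorem integral_rpow_gradedMesh (hc : 0 ≤ c) {δ : ℝ} (hδ : 0 < δ) (k : ℕ) :
    ∫ t in gradedMesh σ c M k..gradedMesh σ c M (k + 1), t ^ (δ - 1)
      = c ^ δ * gradedStep (σ * δ) M k / δ := by
  have hpow : ∀ x : ℝ, 0 ≤ x → (x ^ σ * c) ^ δ = x ^ (σ * δ) * c ^ δ := fun x hx => by
    rw [mul_rpow (rpow_nonneg hx σ) hc, rpow_mul hx]
  rw [integral_rpow (Or.inl (by linarith)), sub_add_cancel, gradedMesh, gradedMesh,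
    hpow _ (by positivity), hpow _ (by positivity), gradedStep, Nat.cast_succ]
  ring

end GradedMesh

variable {X : Type*} [NormedAddCommGroup X] [NormedSpace ℝ X] [CompleteSpace X] in
theorem exists_integral_sq_sub_le_of_gradedMesh {α σ δ c : ℝ} (hα : 0 ≤ α) (hσ : 0 < σ)
    (hδ : 0 < δ) (h : 2 - α < σ * (1 + 2 * δ)) (hc : 0 < c) :
    ∃ K > 0, ∀ M : ℕ, 0 < M → ∀ (B : ℝ) (p p' Q : ℝ → X),
      ContinuousOn p (Icc 0 c) → (∀ t ∈ Ioo 0 c, HasDerivAt p (p' t) t) →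
      ContinuousOn p' (Ioo 0 c) → (∀ t ∈ Ioo 0 c, ‖p' t‖ ≤ B * t ^ (δ - 1)) →
      IsPiecewiseAverage p Q (gradedMesh σ c M) M →
      ∫ t in 0..c, ‖p t - Q t‖ ^ 2 ≤ K * B ^ 2 * (M : ℝ) ^ (α - 2) := by
  obtain ⟨K, hK, hsum⟩ := exists_sum_gradedStep_mul_sq_le hα hσ hδ h
  refine ⟨c ^ (1 + 2 * δ) / δ ^ 2 * K, by positivity, fun M hM B p p' Q hp hd hp' hb hQ => ?_⟩
  have hu0 : gradedMesh σ c M 0 = 0 := gradedMesh_zero hσ.ne'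
  have huM : gradedMesh σ c M M = c := gradedMesh_self hM.ne'
  have hφ : IntervalIntegrable (fun t => B * t ^ (δ - 1)) volume 0 c :=
    (intervalIntegral.intervalIntegrable_rpow' (by linarith)).const_mul B
  have hcell : ∀ k : ℕ, (gradedMesh σ c M (k + 1) - gradedMesh σ c M k) *
      (∫ t in gradedMesh σ c M k..gradedMesh σ c M (k + 1), B * t ^ (δ - 1)) ^ 2
        = c ^ (1 + 2 * δ) / δ ^ 2 * B ^ 2 * (gradedStep σ M k * gradedStep (σ * δ) M k ^ 2) :=
    fun k => by
      have hc₂ : c ^ (1 + 2 * δ) = c * (c ^ δ) ^ 2 := by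
        rw [rpow_add hc, rpow_one, ← rpow_natCast, ← rpow_mul hc.le]
        ring_nf
      rw [intervalIntegral.integral_const_mul, integral_rpow_gradedMesh hc.le hδ,
        gradedMesh_succ_sub, hc₂]
      field_simp
  have := hQ.integral_sq_sub_le (p' := p') (φ := fun t => B * t ^ (δ - 1))
    (gradedMesh_strictMono hσ hc hM) (by rwa [hu0, huM]) (by rwa [hu0, huM]) (by rwa [hu0, huM])
    (by rwa [hu0, huM]) (by rwa [hu0, huM])
  rw [hu0, huM] at this
  calc ∫ t in 0..c, ‖p t - Q t‖ ^ 2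
      ≤ c ^ (1 + 2 * δ) / δ ^ 2 * B ^ 2 *
          ∑ k ∈ range M, gradedStep σ M k * gradedStep (σ * δ) M k ^ 2 := by
        simpa only [hcell, ← mul_sum] using this
    _ ≤ c ^ (1 + 2 * δ) / δ ^ 2 * B ^ 2 * (K * (M : ℝ) ^ (α - 2)) := by
        gcongr
        exact hsum M hM
    _ = c ^ (1 + 2 * δ) / δ ^ 2 * K * B ^ 2 * (M : ℝ) ^ (α - 2) := by ring

theorem rpow_add_rpow_le_mul_rpow {β γ c u v : ℝ} (hβ : β ≤ 0) (hγ : γ ≤ 0) (hu : 0 < u)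
    (huc : u ≤ c) (hcv : c ≤ v) : u ^ β + v ^ γ ≤ (1 + c ^ γ / c ^ β) * u ^ β := by
  have hc : 0 < c := hu.trans_le huc
  have hv : v ^ γ ≤ c ^ γ := rpow_le_rpow_of_nonpos hc hcv hγ
  have hc' : c ^ γ ≤ c ^ γ / c ^ β * u ^ β := by
    rw [div_mul_eq_mul_div, le_div_iff₀ (rpow_pos_of_pos hc β)]
    exact mul_le_mul_of_nonneg_left (rpow_le_rpow_of_nonpos hu huc hβ) (rpow_nonneg hc.le γ)
  linarith

variable {X : Type*} [NormedAddCommGroup X] [NormedSpace ℝ X] [CompleteSpace X] in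
theorem exists_integral_sq_sub_le_left_half {α σ β γ T : ℝ} (hα : 0 ≤ α) (hσ : 0 < σ)
    (hβ₀ : -1 < β) (hβ : β ≤ 0) (hγ : γ ≤ 0) (h : 2 - α < σ * (1 + 2 * (β + 1))) (hT : 0 < T) :
    ∃ K > 0, ∀ A : ℝ, 0 ≤ A → ∀ M : ℕ, 0 < M → ∀ p p' Q : ℝ → X,
      ContinuousOn p (Icc 0 T) → (∀ t ∈ Ioo 0 T, HasDerivAt p (p' t) t) →
      ContinuousOn p' (Ioo 0 T) → (∀ t ∈ Ioo 0 T, ‖p' t‖ ≤ A * (t ^ β + (T - t) ^ γ)) →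
      IsPiecewiseAverage p Q (gradedMesh σ (T / 2) M) M →
      ∫ t in 0..T / 2, ‖p t - Q t‖ ^ 2 ≤ K * A ^ 2 * (M : ℝ) ^ (α - 2) := by
  obtain ⟨K, hK, hhalf⟩ :=
    exists_integral_sq_sub_le_of_gradedMesh (X := X) hα hσ (by linarith) h (half_pos hT)
  set C := 1 + (T / 2) ^ γ / (T / 2) ^ β
  refine ⟨K * C ^ 2, by positivity, fun A hA M hM p p' Q hp hd hp' hb hQ => ?_⟩
  have hsub : Ioo 0 (T / 2) ⊆ Ioo 0 T := Ioo_subset_Ioo_right (by linarith)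
  have hb' : ∀ t ∈ Ioo 0 (T / 2), ‖p' t‖ ≤ A * C * t ^ (β + 1 - 1) := fun t ht => by
    rw [add_sub_cancel_right, mul_assoc]
    exact (hb t (hsub ht)).trans <| mul_le_mul_of_nonneg_left
      (rpow_add_rpow_le_mul_rpow hβ hγ ht.1 ht.2.le (by linarith [ht.2])) hA
  have := hhalf M hM (A * C) p p' Q (hp.mono (Icc_subset_Icc_right (by linarith)))
    (fun t ht => hd t (hsub ht)) (hp'.mono hsub) hb' hQ
  linarith [mul_pow A C 2]

section GradedGrid

variable {σ₁ σ₂ T : ℝ} {M j : ℕ}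

theorem gradedGrid_eq_gradedMesh (hj : j ≤ M) :
    gradedGrid σ₁ σ₂ T M j = gradedMesh σ₁ (T / 2) M j :=
  if_pos hj

theorem gradedGrid_eq_sub_gradedMesh (hM : 0 < M) (h₁ : M ≤ j) (h₂ : j ≤ 2 * M) :
    gradedGrid σ₁ σ₂ T M j = T - gradedMesh σ₂ (T / 2) M (2 * M - j) := by
  rcases h₁.eq_or_lt with rfl | hlt
  · rw [gradedGrid_eq_gradedMesh le_rfl, show 2 * M - M = M by omega,
      gradedMesh_self hM.ne', gradedMesh_self hM.ne']
    ring
  · have hM' : (M : ℝ) ≠ 0 := Nat.cast_ne_zero.2 hM.ne'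
    rw [gradedGrid, if_neg hlt.not_ge, gradedMesh, Nat.cast_sub h₂, Nat.cast_mul, Nat.cast_ofNat,
      sub_div, mul_div_cancel_right₀ _ hM']

theorem isPiecewiseAverage_gradedGrid {X : Type*} [NormedAddCommGroup X] [NormedSpace ℝ X]
    {p Q : ℝ → X}
    (hQ : ∀ j : ℕ, 1 ≤ j → j ≤ 2 * M →
      ∀ t ∈ Ioo (gradedGrid σ₁ σ₂ T M (j - 1)) (gradedGrid σ₁ σ₂ T M j),
        Q t = (gradedGrid σ₁ σ₂ T M j - gradedGrid σ₁ σ₂ T M (j - 1))⁻¹ •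
          ∫ s in (gradedGrid σ₁ σ₂ T M (j - 1))..(gradedGrid σ₁ σ₂ T M j), p s) :
    IsPiecewiseAverage p Q (gradedGrid σ₁ σ₂ T M) (2 * M) :=
  fun k hk t ht => hQ (k + 1) (by omega) hk t ht

end GradedGrid

variable {X : Type*} [NormedAddCommGroup X] [NormedSpace ℝ X] [CompleteSpace X] in
theorem exists_integral_sq_sub_le_gradedGrid {α σ₁ σ₂ β γ T : ℝ} (hα : 0 ≤ α) (hσ₁ : 0 < σ₁)
    (hσ₂ : 0 < σ₂) (hβ₀ : -1 < β) (hβ : β ≤ 0) (hγ₀ : -1 < γ) (hγ : γ ≤ 0)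
    (h₁ : 2 - α < σ₁ * (1 + 2 * (β + 1))) (h₂ : 2 - α < σ₂ * (1 + 2 * (γ + 1))) (hT : 0 < T) :
    ∃ K > 0, ∀ A : ℝ, 0 ≤ A → ∀ M : ℕ, 0 < M → ∀ p p' Q : ℝ → X,
      ContinuousOn p (Icc 0 T) → (∀ t ∈ Ioo 0 T, HasDerivAt p (p' t) t) →
      ContinuousOn p' (Ioo 0 T) → (∀ t ∈ Ioo 0 T, ‖p' t‖ ≤ A * (t ^ β + (T - t) ^ γ)) →
      IsPiecewiseAverage p Q (gradedGrid σ₁ σ₂ T M) (2 * M) →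
      ∫ t in 0..T, ‖p t - Q t‖ ^ 2 ≤ K * A ^ 2 * (M : ℝ) ^ (α - 2) := by
  obtain ⟨K₁, hK₁, hleft⟩ := exists_integral_sq_sub_le_left_half (X := X) hα hσ₁ hβ₀ hβ hγ h₁ hT
  obtain ⟨K₂, hK₂, hright⟩ := exists_integral_sq_sub_le_left_half (X := X) hα hσ₂ hγ₀ hγ hβ h₂ hT
  refine ⟨K₁ + K₂, by positivity, fun A hA M hM p p' Q hp hd hp' hb hQ => ?_⟩
  have hleft' := hleft A hA M hM p p' Q hp hd hp' hb
    (hQ.restrict (by omega) fun k hk => gradedGrid_eq_gradedMesh hk)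
  -- the right half, reflected by `t ↦ T - t`, is a left half with the two exponents swapped
  have hrefl : ∀ u ∈ Ioo 0 T, T - u ∈ Ioo 0 T := fun u hu =>
    ⟨by linarith [hu.2], by linarith [hu.1]⟩
  have hright' := hright A hA M hM (fun u => p (T - u)) (fun u => -p' (T - u)) (fun u => Q (T - u))
    (hp.comp (by fun_prop) fun u hu => ⟨by linarith [hu.2], by linarith [hu.1]⟩)
    (fun u hu => (hd (T - u) (hrefl u hu)).comp_const_sub T u)
    ((hp'.comp (by fun_prop) hrefl).neg)
    (fun u hu => by simpa [add_comm] using hb (T - u) (hrefl u hu))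
    ((hQ.reflect T).restrict (by omega) fun k hk => by
      rw [gradedGrid_eq_sub_gradedMesh hM (by omega) (by omega),
        show 2 * M - (2 * M - k) = k by omega]
      ring)
  have hsplit := intervalIntegral.integral_le_add_adjacent_intervals
    (f := fun t => ‖p t - Q t‖ ^ 2) (fun _ => by positivity) (half_pos hT).le (half_le_self hT.le)
  have hreflect := intervalIntegral.integral_comp_sub_left (a := 0) (b := T / 2)
    (fun t => ‖p t - Q t‖ ^ 2) T
  rw [sub_zero, sub_half] at hreflect
  calc ∫ t in 0..T, ‖p t - Q t‖ ^ 2 ≤ _ := hsplit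
    _ = _ := by rw [← hreflect]
    _ ≤ K₁ * A ^ 2 * (M : ℝ) ^ (α - 2) + K₂ * A ^ 2 * (M : ℝ) ^ (α - 2) :=
        add_le_add hleft' hright'
    _ = (K₁ + K₂) * A ^ 2 * (M : ℝ) ^ (α - 2) := by ring

/-- `L²`-in-time interpolation error estimate on the doubly graded grid: if
`‖p'(t)‖ ≤ A (t^(αr+α/2−1) + (T−t)^(α/2−1))` and `Q_τ p` is the cellwise average of `p`,
then `(∫₀ᵀ ‖p(t) − (Q_τ p)(t)‖² dt)^{1/2} ≤ C A M^(α/2−1)`. -/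
theorem L2_interpolation_error_graded_grid
    {X : Type*} [NormedAddCommGroup X] [InnerProductSpace ℝ X] [CompleteSpace X]
    (α r T σ₁ σ₂ : ℝ) (hα : 0 < α) (hα1 : α < 1)
    (hr : 0 < r) (hr2 : r < min (1 / 2) ((1 - α) / α))
    (hσ₁ : max 1 ((2 - α) / ((2 * r - 1) * α + 1)) < σ₁)
    (hσ₂ : max 1 ((2 - α) / (α + 1)) < σ₂) (hT : 0 < T) :
    ∃ C > (0 : ℝ), ∀ (A : ℝ), 0 < A → ∀ (M : ℕ), 2 ≤ M → ∀ (p p' Q : ℝ → X),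
      ContinuousOn p (Set.Icc 0 T) →
      (∀ t ∈ Set.Ioo (0 : ℝ) T, HasDerivAt p (p' t) t) →
      ContinuousOn p' (Set.Ioo 0 T) →
      (∀ t ∈ Set.Ioo (0 : ℝ) T,
        ‖p' t‖ ≤ A * (t ^ (α * r + α / 2 - 1) + (T - t) ^ (α / 2 - 1))) →
      (∀ j : ℕ, 1 ≤ j → j ≤ 2 * M →
        ∀ t ∈ Set.Ioo (gradedGrid σ₁ σ₂ T M (j - 1)) (gradedGrid σ₁ σ₂ T M j),
          Q t = (gradedGrid σ₁ σ₂ T M j - gradedGrid σ₁ σ₂ T M (j - 1))⁻¹ •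
            ∫ s in (gradedGrid σ₁ σ₂ T M (j - 1))..(gradedGrid σ₁ σ₂ T M j), p s) →
      Real.sqrt (∫ t in (0 : ℝ)..T, ‖p t - Q t‖ ^ 2)
        ≤ C * A * (M : ℝ) ^ (α / 2 - 1) := by
  have hσ₁₀ : 0 < σ₁ := by linarith [le_max_left 1 ((2 - α) / ((2 * r - 1) * α + 1))]
  have hσ₂₀ : 0 < σ₂ := by linarith [le_max_left 1 ((2 - α) / (α + 1))]
  have hσ₁' : (2 - α) / ((2 * r - 1) * α + 1) < σ₁ := (le_max_right _ _).trans_lt hσ₁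
  have hσ₂' : (2 - α) / (α + 1) < σ₂ := (le_max_right _ _).trans_lt hσ₂
  have hαr : α * r < 1 - α := by
    have := (lt_min_iff.1 hr2).2
    rwa [lt_div_iff₀ hα, mul_comm] at this
  rw [div_lt_iff₀ (by nlinarith)] at hσ₁'
  rw [div_lt_iff₀ (by linarith)] at hσ₂'
  obtain ⟨K, hK, hbound⟩ := exists_integral_sq_sub_le_gradedGrid (X := X) (σ₁ := σ₁) (σ₂ := σ₂)
    (β := α * r + α / 2 - 1) (γ := α / 2 - 1) hα.le hσ₁₀ hσ₂₀ (by nlinarith) (by linarith)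
    (by linarith) (by linarith) (by nlinarith) (by linarith) hT
  refine ⟨√K, by positivity, fun A hA M hM p p' Q hp hd hp' hb hQ => ?_⟩
  have hM₂ : ((M : ℝ) ^ (α / 2 - 1)) ^ 2 = (M : ℝ) ^ (α - 2) := by
    rw [← rpow_natCast, ← rpow_mul M.cast_nonneg]
    ring_nf
  rw [sqrt_le_left (by positivity), mul_pow, mul_pow, sq_sqrt hK.le, hM₂]
  exact hbound A hA.le M (by omega) p p' Q hp hd hp' hb (isPiecewiseAverage_gradedGrid hQ)
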